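/- arXiv:1310.5595 — 2 statements merged into one kernel-verified Lean document; each statement's English description precedes it below -/
import Mathlib

section
/- (Uniqueness of decomposition into irreducibles.) If T_1, …, T_n and S_1, …, S_k are irreducible tuples of complex matrices over the same index set Λ such that T_1 ⊕ ⋯ ⊕ T_n ≡ S_1 ⊕ ⋯ ⊕ S_k, then k = n and there exists a permutation τ of {1,…,n} such that S_j ≡ T_{τ(j)} for each j. -/
noncomputable section

/-- A tuple of complex matrices over an index set `Λ`: a family of `n × n` complex
matrices indexed by `Λ`, where `n ≥ 1` is the *degree* of the tuple. -/
structure MatTup (Λ : Type*) where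
  deg : ℕ
  deg_pos : 0 < deg
  mat : Λ → Matrix (Fin deg) (Fin deg) ℂ

namespace MatTup

variable {Λ : Type*}

/-- The unitary action `U.X = (U Xₗ U⁻¹)ₗ`. -/
def act (X : MatTup Λ) (U : Matrix (Fin X.deg) (Fin X.deg) ℂ) : MatTup Λ :=
  ⟨X.deg, X.deg_pos, fun l => U * X.mat l * U⁻¹⟩

/-- Direct sum `X ⊕ Y`, the tuple of block-diagonal matrices. -/
def dsum (X Y : MatTup Λ) : MatTup Λ :=
  ⟨X.deg + Y.deg, Nat.add_pos_left X.deg_pos _, fun l =>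
    Matrix.reindex finSumFinEquiv finSumFinEquiv (Matrix.fromBlocks (X.mat l) 0 0 (Y.mat l))⟩

/-- Unitary equivalence `X ≡ Y`: the degrees agree and some unitary `U` satisfies `U.X = Y`. -/
def UEquiv (X Y : MatTup Λ) : Prop :=
  ∃ U ∈ Matrix.unitaryGroup (Fin X.deg) ℂ, X.act U = Y

/-- `X ≼ Y`: either `X ≡ Y`, or there are `A`, `B` with `X ≡ A` and `Y ≡ A ⊕ B`. -/
def Sub (X Y : MatTup Λ) : Prop :=
  X.UEquiv Y ∨ ∃ A B : MatTup Λ, X.UEquiv A ∧ Y.UEquiv (A.dsum B)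

/-- Disjointness `X ⊥ Y`: no tuple `A` satisfies both `A ≼ X` and `A ≼ Y`. -/
def Disj (X Y : MatTup Λ) : Prop :=
  ¬∃ A : MatTup Λ, A.Sub X ∧ A.Sub Y

/-- `X` is irreducible if no unitary `V` satisfies `V.X = A ⊕ B` for tuples `A`, `B`. -/
def Irred (X : MatTup Λ) : Prop :=
  ¬∃ (A B : MatTup Λ) (V : Matrix (Fin X.deg) (Fin X.deg) ℂ),
      V ∈ Matrix.unitaryGroup (Fin X.deg) ℂ ∧ X.act V = A.dsum B

/-- The stabilizer of `X`: all unitaries `U` with `U.X = X`. -/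
def stab (X : MatTup Λ) : Set (Matrix (Fin X.deg) (Fin X.deg) ℂ) :=
  {U | U ∈ Matrix.unitaryGroup (Fin X.deg) ℂ ∧ X.act U = X}

/-- The direct sum `T 0 ⊕ T 1 ⊕ ⋯` of a nonempty finite family of tuples
(associated to the left). -/
def bigDsum : {k : ℕ} → (Fin k → MatTup Λ) → 0 < k → MatTup Λ
  | 0, _, h => absurd h (lt_irrefl 0)
  | 1, T, _ => T 0
  | k + 2, T, _ =>
      (bigDsum (fun j : Fin (k + 1) => T j.castSucc) k.succ_pos).dsum (T (Fin.last (k + 1)))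

end MatTup

/-! For tuples `A`, `X` consider the space `hom A X` of matrices `M` with `M Aₗ = Xₗ M` and
`M Aₗᴴ = Xₗᴴ M`. Its dimension is invariant under unitary equivalence of `X` and additive in
direct sums. By Schur's lemma it is `1` for irreducible `A ≡ X` and `0` for irreducible
`A ≢ X`: a Hermitian element of `hom X X` is scalar, since otherwise its eigenspaces would split
`X`, and a nonzero `M ∈ hom A X` has `Mᴴ M` and `M Mᴴ` nonzero scalars, so that a multiple of `M`
is a unitary conjugating `A` into `X`. Hence `dim hom A (T₁ ⊕ ⋯ ⊕ Tₙ)` is the number of `Tᵢ`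
equivalent to an irreducible `A`; these multiplicities agree for the two decompositions, and
matching the equivalence classes gives the permutation. -/

namespace Matrix

lemma inv_eq_conjTranspose_of_mem_unitaryGroup {d : Type*} [Fintype d] [DecidableEq d]
    {U : Matrix d d ℂ} (hU : U ∈ unitaryGroup d ℂ) : U⁻¹ = Uᴴ :=
  inv_eq_left_inv (mem_unitaryGroup_iff'.mp hU)

lemma mul_eq_reindex_fromBlocks_mul_iff {m₁ m₂ n a : Type*} [Fintype m₁] [Fintype m₂]
    [Fintype n] [Fintype a] (e : m₁ ⊕ m₂ ≃ n) (P : Matrix m₁ m₁ ℂ) (Q : Matrix m₂ m₂ ℂ)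
    (M : Matrix n a ℂ) (C : Matrix a a ℂ) :
    M * C = reindex e e (fromBlocks P 0 0 Q) * M ↔
      toRows₁ (M.submatrix e id) * C = P * toRows₁ (M.submatrix e id) ∧
      toRows₂ (M.submatrix e id) * C = Q * toRows₂ (M.submatrix e id) := by
  have hinj : Function.Injective fun N : Matrix n a ℂ => N.submatrix e id := fun N N' h => by
    simpa using congrArg (·.submatrix e.symm id) h
  rw [← hinj.eq_iff]
  have hC : (M * C).submatrix e id = M.submatrix e id * C := by
    simpa using submatrix_mul M C e id id Function.bijective_id
  have hB : (reindex e e (fromBlocks P 0 0 Q) * M).submatrix e id =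
      fromBlocks P 0 0 Q * M.submatrix e id := by
    simpa using submatrix_mul (reindex e e (fromBlocks P 0 0 Q)) M e e id e.bijective
  simp only [hC, hB]
  obtain ⟨N₁, N₂, hN⟩ : ∃ N₁ N₂, M.submatrix e id = fromRows N₁ N₂ :=
    ⟨_, _, (fromRows_toRows _).symm⟩
  simp [hN, fromRows_mul, fromBlocks_mul_fromRows, fromRows_ext_iff]

lemma permMatrix_mem_unitaryGroup {n : Type*} [Fintype n] [DecidableEq n] (σ : Equiv.Perm n) :
    σ.permMatrix ℂ ∈ unitaryGroup n ℂ := by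
  rw [mem_unitaryGroup_iff', star_eq_conjTranspose, conjTranspose_permMatrix, ← permMatrix_mul,
    mul_inv_cancel, permMatrix_one]

open scoped ComplexOrder in
lemma exists_smul_mem_unitaryGroup {n : Type*} [Fintype n] [DecidableEq n] [Nonempty n]
    {M : Matrix n n ℂ} {c : ℂ} (hM : Mᴴ * M = c • 1) (hc : c ≠ 0) :
    ∃ r : ℂ, r • M ∈ unitaryGroup n ℂ := by
  have hc₀ : 0 ≤ c := by
    obtain ⟨i⟩ := ‹Nonempty n›
    simpa [hM] using (posSemidef_conjTranspose_mul_self M).diag_nonneg (i := i)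
  obtain ⟨ρ, rfl⟩ : ∃ ρ : ℝ, c = ρ :=
    ⟨c.re, Complex.ext rfl (by simpa using (Complex.nonneg_iff.mp hc₀).2.symm)⟩
  have hρ : 0 < ρ := (Complex.zero_le_real.mp hc₀).lt_of_ne (by rintro rfl; simp at hc)
  refine ⟨((√ρ)⁻¹ : ℝ), ?_⟩
  rw [mem_unitaryGroup_iff', star_eq_conjTranspose, conjTranspose_smul, smul_mul_smul_comm, hM,
    smul_smul, Complex.star_def, Complex.conj_ofReal, ← Complex.ofReal_mul,
    ← Complex.ofReal_mul, ← mul_inv, Real.mul_self_sqrt hρ.le, inv_mul_cancel₀ hρ.ne',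
    Complex.ofReal_one, one_smul]

end Matrix

namespace MatTup

open Matrix ComplexStarModule

variable {Λ : Type*}

instance (X : MatTup Λ) : Nonempty (Fin X.deg) := ⟨⟨0, X.deg_pos⟩⟩

lemma act_one (X : MatTup Λ) : X.act 1 = X := by
  simp [act]

lemma act_act (X : MatTup Λ) (U V : Matrix (Fin X.deg) (Fin X.deg) ℂ) :
    (X.act U).act V = X.act (V * U) := by
  show mk X.deg X.deg_pos (fun l => V * (U * X.mat l * U⁻¹) * V⁻¹) = _
  simp only [act, Matrix.mul_inv_rev, Matrix.mul_assoc]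

lemma UEquiv.refl (X : MatTup Λ) : X.UEquiv X := ⟨1, one_mem _, act_one X⟩

lemma UEquiv.symm {X Y : MatTup Λ} (h : X.UEquiv Y) : Y.UEquiv X := by
  obtain ⟨U, hU, rfl⟩ := h
  show ∃ V ∈ unitaryGroup (Fin X.deg) ℂ, (X.act U).act V = X
  refine ⟨star U, Unitary.star_mem hU, ?_⟩
  rw [act_act, Unitary.star_mul_self_of_mem hU, act_one]

lemma UEquiv.trans {X Y Z : MatTup Λ} (h : X.UEquiv Y) (h' : Y.UEquiv Z) : X.UEquiv Z := by
  obtain ⟨U, hU, rfl⟩ := h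
  obtain ⟨V, hV, rfl⟩ := h'
  exact ⟨(show Matrix (Fin X.deg) (Fin X.deg) ℂ from V) * U, mul_mem hV hU,
    (act_act X U V).symm⟩

def uequivSetoid (Λ : Type*) : Setoid (MatTup Λ) :=
  ⟨UEquiv, ⟨UEquiv.refl, UEquiv.symm, UEquiv.trans⟩⟩

lemma Irred.of_uequiv {X Y : MatTup Λ} (hX : X.Irred) (h : X.UEquiv Y) : Y.Irred := by
  obtain ⟨U, hU, rfl⟩ := h
  rintro ⟨A, B, V, hV, hVX⟩
  exact hX ⟨A, B, (show Matrix (Fin X.deg) (Fin X.deg) ℂ from V) * U, mul_mem hV hU,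
    (act_act X U V).symm.trans hVX⟩

lemma uequiv_star_mul_mul (X : MatTup Λ) {W : Matrix (Fin X.deg) (Fin X.deg) ℂ}
    (hW : W ∈ unitaryGroup (Fin X.deg) ℂ) :
    X.UEquiv ⟨X.deg, X.deg_pos, fun l => star W * X.mat l * W⟩ := by
  refine ⟨star W, Unitary.star_mem hW, ?_⟩
  have hinv : (star W)⁻¹ = W := by
    rw [inv_eq_conjTranspose_of_mem_unitaryGroup (Unitary.star_mem hW), ← star_eq_conjTranspose,
      star_star]
  simp only [act, hinv]

lemma not_irred_of_uequiv_dsum {X A B : MatTup Λ} (h : X.UEquiv (A.dsum B)) : ¬ X.Irred :=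
  fun hX => let ⟨U, hU, hUX⟩ := h; hX ⟨A, B, U, hU, hUX⟩

/-- Intertwiners from `X` to `Y` that also intertwine the adjoints, which makes the family of
these spaces closed under `ᴴ`. -/
def hom (X Y : MatTup Λ) : Submodule ℂ (Matrix (Fin Y.deg) (Fin X.deg) ℂ) where
  carrier := {M | ∀ l, M * X.mat l = Y.mat l * M ∧ M * (X.mat l)ᴴ = (Y.mat l)ᴴ * M}
  add_mem' hM hN l := by
    simp only [Matrix.add_mul, Matrix.mul_add, (hM l).1, (hN l).1, (hM l).2, (hN l).2, and_self]
  zero_mem' l := by simp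
  smul_mem' c M hM l := by
    simp only [Matrix.smul_mul, Matrix.mul_smul, (hM l).1, (hM l).2, and_self]

lemma mem_hom {X Y : MatTup Λ} {M : Matrix (Fin Y.deg) (Fin X.deg) ℂ} :
    M ∈ hom X Y ↔ ∀ l, M * X.mat l = Y.mat l * M ∧ M * (X.mat l)ᴴ = (Y.mat l)ᴴ * M :=
  Iff.rfl

lemma conjTranspose_mem_hom {X Y : MatTup Λ} {M : Matrix (Fin Y.deg) (Fin X.deg) ℂ}
    (hM : M ∈ hom X Y) : Mᴴ ∈ hom Y X := fun l =>
  ⟨by simpa [Matrix.conjTranspose_mul] using congrArg conjTranspose (hM l).2.symm,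
   by simpa [Matrix.conjTranspose_mul] using congrArg conjTranspose (hM l).1.symm⟩

lemma mul_mem_hom {X Y Z : MatTup Λ} {M : Matrix (Fin Z.deg) (Fin Y.deg) ℂ}
    {N : Matrix (Fin Y.deg) (Fin X.deg) ℂ} (hM : M ∈ hom Y Z) (hN : N ∈ hom X Y) :
    M * N ∈ hom X Z := fun l =>
  ⟨by rw [Matrix.mul_assoc, (hN l).1, ← Matrix.mul_assoc, (hM l).1, Matrix.mul_assoc],
   by rw [Matrix.mul_assoc, (hN l).2, ← Matrix.mul_assoc, (hM l).2, Matrix.mul_assoc]⟩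

lemma one_mem_hom (X : MatTup Λ) : 1 ∈ hom X X := fun l => by simp

lemma mem_hom_act (X : MatTup Λ) {U : Matrix (Fin X.deg) (Fin X.deg) ℂ}
    (hU : U ∈ unitaryGroup (Fin X.deg) ℂ) : U ∈ hom X (X.act U) := by
  have hUU : Uᴴ * U = 1 := mem_unitaryGroup_iff'.mp hU
  refine fun l => ⟨?_, ?_⟩
  · show U * X.mat l = U * X.mat l * U⁻¹ * U
    rw [inv_eq_conjTranspose_of_mem_unitaryGroup hU, Matrix.mul_assoc _ Uᴴ, hUU, Matrix.mul_one]
  · show U * (X.mat l)ᴴ = (U * X.mat l * U⁻¹)ᴴ * U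
    simp only [inv_eq_conjTranspose_of_mem_unitaryGroup hU, Matrix.conjTranspose_mul,
      Matrix.conjTranspose_conjTranspose, Matrix.mul_assoc, hUU, Matrix.mul_one]

def homEquivOfMulEqOne (A : MatTup Λ) {X Y : MatTup Λ} {U : Matrix (Fin Y.deg) (Fin X.deg) ℂ}
    {V : Matrix (Fin X.deg) (Fin Y.deg) ℂ} (hU : U ∈ hom X Y) (hV : V ∈ hom Y X)
    (hVU : V * U = 1) (hUV : U * V = 1) : hom A X ≃ₗ[ℂ] hom A Y where
  toFun M := ⟨U * M.1, mul_mem_hom hU M.2⟩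
  invFun M := ⟨V * M.1, mul_mem_hom hV M.2⟩
  map_add' M N := Subtype.ext (Matrix.mul_add U M.1 N.1)
  map_smul' c M := Subtype.ext (Matrix.mul_smul U c M.1)
  left_inv M := Subtype.ext <| by simp [← Matrix.mul_assoc, hVU]
  right_inv M := Subtype.ext <| by simp [← Matrix.mul_assoc, hUV]

lemma finrank_hom_congr_right (A : MatTup Λ) {X Y : MatTup Λ} (h : X.UEquiv Y) :
    Module.finrank ℂ (hom A X) = Module.finrank ℂ (hom A Y) := by
  obtain ⟨U, hU, rfl⟩ := h
  exact (homEquivOfMulEqOne A (mem_hom_act X hU) (conjTranspose_mem_hom (mem_hom_act X hU))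
    (mem_unitaryGroup_iff'.mp hU) (mem_unitaryGroup_iff.mp hU)).finrank_eq

/-- `finSumFinEquiv`, with codomain written as `Fin (X.dsum Y).deg` so that it acts on matrices
indexed by the degree of `X.dsum Y` (which is `X.deg + Y.deg` only up to unfolding `dsum`). -/
def dsumEquiv (X Y : MatTup Λ) : Fin X.deg ⊕ Fin Y.deg ≃ Fin (X.dsum Y).deg := finSumFinEquiv

lemma mem_hom_dsum_iff {A X Y : MatTup Λ} {M : Matrix (Fin (X.dsum Y).deg) (Fin A.deg) ℂ} :
    M ∈ hom A (X.dsum Y) ↔ toRows₁ (M.submatrix (dsumEquiv X Y) id) ∈ hom A X ∧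
      toRows₂ (M.submatrix (dsumEquiv X Y) id) ∈ hom A Y := by
  show (∀ l, M * A.mat l = reindex (dsumEquiv X Y) (dsumEquiv X Y)
      (fromBlocks (X.mat l) 0 0 (Y.mat l)) * M ∧ M * (A.mat l)ᴴ =
      (reindex (dsumEquiv X Y) (dsumEquiv X Y) (fromBlocks (X.mat l) 0 0 (Y.mat l)))ᴴ * M) ↔ _
  simp only [conjTranspose_reindex, fromBlocks_conjTranspose, conjTranspose_zero,
    mul_eq_reindex_fromBlocks_mul_iff, mem_hom]
  constructor
  · intro h
    exact ⟨fun l => ⟨(h l).1.1, (h l).2.1⟩, fun l => ⟨(h l).1.2, (h l).2.2⟩⟩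
  · intro h l
    exact ⟨⟨(h.1 l).1, (h.2 l).1⟩, (h.1 l).2, (h.2 l).2⟩

def homDsumEquiv (A X Y : MatTup Λ) : hom A (X.dsum Y) ≃ₗ[ℂ] hom A X × hom A Y where
  toFun M := (⟨_, (mem_hom_dsum_iff.mp M.2).1⟩, ⟨_, (mem_hom_dsum_iff.mp M.2).2⟩)
  invFun N := ⟨(fromRows N.1.1 N.2.1).submatrix (dsumEquiv X Y).symm id,
    mem_hom_dsum_iff.mpr ⟨by simp, by simp⟩⟩
  map_add' M N := rfl
  map_smul' c M := rfl
  left_inv M := by ext i j; simp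
  right_inv N := by ext i j <;> simp

lemma finrank_hom_dsum (A X Y : MatTup Λ) : Module.finrank ℂ (hom A (X.dsum Y)) =
    Module.finrank ℂ (hom A X) + Module.finrank ℂ (hom A Y) := by
  rw [(homDsumEquiv A X Y).finrank_eq, Module.finrank_prod]

lemma finrank_hom_bigDsum (A : MatTup Λ) {k : ℕ} (T : Fin k → MatTup Λ) (hk : 0 < k) :
    Module.finrank ℂ (hom A (bigDsum T hk)) = ∑ i, Module.finrank ℂ (hom A (T i)) := by
  induction k with
  | zero => exact absurd hk (lt_irrefl 0)
  | succ k ih =>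
    rcases k with _ | k
    · rw [bigDsum, Fin.sum_univ_one]
    · rw [bigDsum, finrank_hom_dsum, ih]
      exact (Fin.sum_univ_castSucc fun i => Module.finrank ℂ (hom A (T i))).symm

lemma uequiv_mk_submatrix (X : MatTup Λ) {m : ℕ} (hm : 0 < m) (e : Fin m ≃ Fin X.deg) :
    X.UEquiv ⟨m, hm, fun l => (X.mat l).submatrix e e⟩ := by
  obtain ⟨n, hn, f⟩ := X
  obtain rfl : m = n := by simpa using Fintype.card_congr e
  refine ⟨Equiv.Perm.permMatrix ℂ e, permMatrix_mem_unitaryGroup e, ?_⟩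
  simp only [act, inv_eq_conjTranspose_of_mem_unitaryGroup (permMatrix_mem_unitaryGroup e),
    conjTranspose_permMatrix, PEquiv.toMatrix_toPEquiv_mul, PEquiv.mul_toMatrix_toPEquiv,
    submatrix_submatrix]
  rfl

lemma not_irred_of_forall_mat_eq_zero (X : MatTup Λ) (p : Fin X.deg → Prop) [DecidablePred p]
    (h₀ : ∃ i, p i) (h₁ : ∃ i, ¬ p i)
    (hX : ∀ l i j, p i → ¬ p j → X.mat l i j = 0 ∧ X.mat l j i = 0) : ¬ X.Irred := by
  have ha : 0 < Fintype.card {i // p i} :=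
    Fintype.card_pos_iff.mpr (h₀.elim fun i hi => ⟨⟨i, hi⟩⟩)
  have hb : 0 < Fintype.card {i // ¬ p i} :=
    Fintype.card_pos_iff.mpr (h₁.elim fun i hi => ⟨⟨i, hi⟩⟩)
  let e : Fin (Fintype.card {i // p i}) ⊕ Fin (Fintype.card {i // ¬ p i}) ≃ Fin X.deg :=
    (Equiv.sumCongr (Fintype.equivFin _).symm (Fintype.equivFin _).symm).trans
      (Equiv.sumCompl p)
  let B (l : Λ) := (X.mat l).submatrix e e
  have hB (l : Λ) : B l = fromBlocks (B l).toBlocks₁₁ 0 0 (B l).toBlocks₂₂ := by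
    conv_lhs => rw [← fromBlocks_toBlocks (B l)]
    congr <;> ext i j
    · exact (hX l _ _ ((Fintype.equivFin _).symm i).2 ((Fintype.equivFin _).symm j).2).1
    · exact (hX l _ _ ((Fintype.equivFin _).symm j).2 ((Fintype.equivFin _).symm i).2).2
  refine not_irred_of_uequiv_dsum (A := ⟨_, ha, fun l => (B l).toBlocks₁₁⟩)
    (B := ⟨_, hb, fun l => (B l).toBlocks₂₂⟩)
    ((uequiv_mk_submatrix X (Nat.add_pos_left ha _) (finSumFinEquiv.symm.trans e)).trans ?_)
  dsimp only [dsum]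
  convert UEquiv.refl _ using 2
  funext l
  rw [reindex_apply, ← hB l]
  rfl

lemma exists_diagonal_eq_smul_one {X : MatTup Λ} (hX : X.Irred) (d : Fin X.deg → ℂ)
    (hd : ∀ l, diagonal d * X.mat l = X.mat l * diagonal d) :
    ∃ c : ℂ, diagonal d = c • 1 := by
  let i₀ : Fin X.deg := ⟨0, X.deg_pos⟩
  by_cases hconst : ∀ i, d i = d i₀
  · exact ⟨d i₀, by rw [smul_one_eq_diagonal]; exact congrArg diagonal (funext hconst)⟩
  push Not at hconst
  obtain ⟨i₁, hi₁⟩ := hconst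
  have hzero (l : Λ) (i j : Fin X.deg) (hij : d i ≠ d j) : X.mat l i j = 0 := by
    have h : (d i - d j) * X.mat l i j = 0 := by
      have hlij := congrFun (congrFun (hd l) i) j
      rw [diagonal_mul, mul_diagonal] at hlij
      linear_combination hlij
    exact (mul_eq_zero.mp h).resolve_left (sub_ne_zero.mpr hij)
  classical
  exact (not_irred_of_forall_mat_eq_zero X (fun i => d i = d i₀) ⟨i₀, rfl⟩ ⟨i₁, hi₁⟩
    (fun l i j hi hj => ⟨hzero l i j (hi ▸ Ne.symm hj), hzero l j i (hi ▸ hj)⟩) hX).elim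

lemma exists_eq_smul_one_of_isHermitian {X : MatTup Λ} (hX : X.Irred)
    {H : Matrix (Fin X.deg) (Fin X.deg) ℂ} (hH : H.IsHermitian) (hHX : H ∈ hom X X) :
    ∃ c : ℂ, H = c • 1 := by
  set W : Matrix (Fin X.deg) (Fin X.deg) ℂ := hH.eigenvectorUnitary.1
  have hW : W ∈ unitaryGroup (Fin X.deg) ℂ := hH.eigenvectorUnitary.2
  have hWW : W * star W = 1 := Unitary.mul_star_self_of_mem hW
  have hconj (A B : Matrix (Fin X.deg) (Fin X.deg) ℂ) :
      star W * A * W * (star W * B * W) = star W * (A * B) * W := by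
    simp only [Matrix.mul_assoc, ← Matrix.mul_assoc W (star W), hWW, Matrix.one_mul]
  have hdiag : star W * H * W = diagonal (RCLike.ofReal ∘ hH.eigenvalues) := by
    simpa [Unitary.conjStarAlgAut_apply] using hH.conjStarAlgAut_star_eigenvectorUnitary
  obtain ⟨c, hc⟩ := exists_diagonal_eq_smul_one (hX.of_uequiv (uequiv_star_mul_mul X hW)) _
    fun l => by
      show _ * (star W * X.mat l * W) = (star W * X.mat l * W) * _
      rw [← hdiag, hconj, hconj, (hHX l).1]
  refine ⟨c, ?_⟩
  calc H = W * (star W * H * W) * star W := by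
        simp only [Matrix.mul_assoc, hWW, Matrix.mul_one,
          ← Matrix.mul_assoc W (star W), Matrix.one_mul]
    _ = c • 1 := by rw [hdiag, hc, Matrix.mul_smul, Matrix.mul_one, Matrix.smul_mul, hWW]

lemma exists_eq_smul_one_of_mem_hom {X : MatTup Λ} (hX : X.Irred)
    {N : Matrix (Fin X.deg) (Fin X.deg) ℂ} (hN : N ∈ hom X X) : ∃ c : ℂ, N = c • 1 := by
  have hN' : star N ∈ hom X X := conjTranspose_mem_hom hN
  have hre : (ℜ N : Matrix (Fin X.deg) (Fin X.deg) ℂ) ∈ hom X X := by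
    rw [realPart_apply_coe]
    exact Submodule.smul_of_tower_mem _ _ (add_mem hN hN')
  have him : (ℑ N : Matrix (Fin X.deg) (Fin X.deg) ℂ) ∈ hom X X := by
    rw [imaginaryPart_apply_coe]
    exact Submodule.smul_mem _ _ (Submodule.smul_of_tower_mem _ _ (sub_mem hN hN'))
  obtain ⟨a, ha⟩ := exists_eq_smul_one_of_isHermitian hX (ℜ N).2.isHermitian hre
  obtain ⟨b, hb⟩ := exists_eq_smul_one_of_isHermitian hX (ℑ N).2.isHermitian him
  refine ⟨a + Complex.I * b, ?_⟩
  rw [← realPart_add_I_smul_imaginaryPart N, ha, hb, smul_smul, add_smul]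

lemma uequiv_of_unitary_mem_hom {X : MatTup Λ} {hm : 0 < X.deg}
    {g : Λ → Matrix (Fin X.deg) (Fin X.deg) ℂ}
    {U : Matrix (Fin X.deg) (Fin X.deg) ℂ} (hU : U ∈ unitaryGroup (Fin X.deg) ℂ)
    (hUX : U ∈ hom X ⟨X.deg, hm, g⟩) : X.UEquiv ⟨X.deg, hm, g⟩ := by
  refine ⟨U, hU, congrArg (mk _ _) (funext fun l => ?_)⟩
  rw [(hUX l).1, Matrix.mul_assoc, inv_eq_conjTranspose_of_mem_unitaryGroup hU,
    ← star_eq_conjTranspose, Unitary.mul_star_self_of_mem hU, Matrix.mul_one]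

open scoped ComplexOrder in
lemma uequiv_of_mem_hom {X Y : MatTup Λ} (hX : X.Irred) (hY : Y.Irred)
    {M : Matrix (Fin Y.deg) (Fin X.deg) ℂ} (hM : M ∈ hom X Y) (hM0 : M ≠ 0) : X.UEquiv Y := by
  obtain ⟨a, ha⟩ := exists_eq_smul_one_of_mem_hom hX (mul_mem_hom (conjTranspose_mem_hom hM) hM)
  obtain ⟨b, hb⟩ := exists_eq_smul_one_of_mem_hom hY (mul_mem_hom hM (conjTranspose_mem_hom hM))
  have ha₀ : a ≠ 0 := by
    rintro rfl
    exact hM0 (conjTranspose_mul_self_eq_zero.mp (by simpa using ha))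
  have hb₀ : b ≠ 0 := by
    rintro rfl
    exact hM0 (self_mul_conjTranspose_eq_zero.mp (by simpa using hb))
  have hdeg : X.deg = Y.deg := by
    have hrX := rank_conjTranspose_mul_self M
    have hrY := rank_self_mul_conjTranspose M
    rw [ha, rank_smul_of_mem_nonZeroDivisors _ (mem_nonZeroDivisors_of_ne_zero ha₀), rank_one,
      Fintype.card_fin] at hrX
    rw [hb, rank_smul_of_mem_nonZeroDivisors _ (mem_nonZeroDivisors_of_ne_zero hb₀), rank_one,
      Fintype.card_fin] at hrY
    exact hrX.trans hrY.symm
  obtain ⟨m, hm, g⟩ := Y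
  subst hdeg
  obtain ⟨r, hr⟩ := exists_smul_mem_unitaryGroup ha ha₀
  exact uequiv_of_unitary_mem_hom hr (Submodule.smul_mem _ r hM)

lemma finrank_hom_self {X : MatTup Λ} (hX : X.Irred) : Module.finrank ℂ (hom X X) = 1 := by
  have hspan : hom X X = ℂ ∙ 1 := by
    refine le_antisymm (fun N hN => ?_) ((Submodule.span_singleton_le_iff_mem _ _).mpr
      (one_mem_hom X))
    obtain ⟨c, rfl⟩ := exists_eq_smul_one_of_mem_hom hX hN
    exact Submodule.smul_mem _ c (Submodule.mem_span_singleton_self 1)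
  rw [hspan, finrank_span_singleton one_ne_zero]

lemma finrank_hom_of_uequiv {X Y : MatTup Λ} (hX : X.Irred) (h : X.UEquiv Y) :
    Module.finrank ℂ (hom X Y) = 1 := by
  rw [← finrank_hom_congr_right X h, finrank_hom_self hX]

lemma finrank_hom_of_not_uequiv {X Y : MatTup Λ} (hX : X.Irred) (hY : Y.Irred)
    (h : ¬ X.UEquiv Y) : Module.finrank ℂ (hom X Y) = 0 := by
  refine Submodule.finrank_eq_zero.mpr (eq_bot_iff.mpr fun M hM => ?_)
  by_contra hM0
  exact h (uequiv_of_mem_hom hX hY hM hM0)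

lemma card_uequiv_eq_finrank_hom {A : MatTup Λ} (hA : A.Irred) {k : ℕ} {T : Fin k → MatTup Λ}
    (hT : ∀ i, (T i).Irred) (hk : 0 < k) :
    Nat.card {i // (T i).UEquiv A} = Module.finrank ℂ (hom A (bigDsum T hk)) := by
  classical
  rw [finrank_hom_bigDsum, Nat.card_eq_fintype_card, Fintype.card_subtype, Finset.card_filter]
  refine Finset.sum_congr rfl fun i _ => ?_
  split_ifs with hi
  · exact (finrank_hom_of_uequiv hA hi.symm).symm
  · exact (finrank_hom_of_not_uequiv hA (hT i) fun h => hi h.symm).symm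

lemma card_uequiv_eq_of_uequiv_bigDsum {n k : ℕ} (hn : 0 < n) (hk : 0 < k)
    {T : Fin n → MatTup Λ} {S : Fin k → MatTup Λ} (hT : ∀ i, (T i).Irred)
    (hS : ∀ j, (S j).Irred)
    (h : (bigDsum T hn).UEquiv (bigDsum S hk)) (A : MatTup Λ) :
    Nat.card {i // (T i).UEquiv A} = Nat.card {j // (S j).UEquiv A} := by
  by_cases hA : A.Irred
  · rw [card_uequiv_eq_finrank_hom hA hT hn, card_uequiv_eq_finrank_hom hA hS hk,
      finrank_hom_congr_right A h]
  · have hnot (X : MatTup Λ) (hX : X.Irred) : ¬ X.UEquiv A := fun hXA => hA (hX.of_uequiv hXA)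
    have : IsEmpty {i // (T i).UEquiv A} := ⟨fun i => hnot _ (hT i.1) i.2⟩
    have : IsEmpty {j // (S j).UEquiv A} := ⟨fun j => hnot _ (hS j.1) j.2⟩
    rw [Nat.card_of_isEmpty, Nat.card_of_isEmpty]

end MatTup

theorem stmt_6_general {Λ : Type*} {n k : ℕ} (hn : 0 < n) (hk : 0 < k)
    (T : Fin n → MatTup Λ) (S : Fin k → MatTup Λ)
    (hT : ∀ j, (T j).Irred) (hS : ∀ j, (S j).Irred)
    (h : (MatTup.bigDsum T hn).UEquiv (MatTup.bigDsum S hk)) :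
    ∃ (hkn : k = n) (τ : Equiv.Perm (Fin n)),
      ∀ j : Fin k, (S j).UEquiv (T (τ (Fin.cast hkn j))) := by
  let s := MatTup.uequivSetoid Λ
  have hfiber (q : Quotient s) :
      Nat.card {j // Quotient.mk s (S j) = q} = Nat.card {i // Quotient.mk s (T i) = q} := by
    induction q using Quotient.inductionOn with
    | h A =>
      simp only [Quotient.eq]
      exact (MatTup.card_uequiv_eq_of_uequiv_bigDsum hn hk hT hS h A).symm
  let F (q : Quotient s) := (Finite.card_eq.mp (hfiber q)).some
  let e : Fin k ≃ Fin n := Equiv.ofFiberEquiv F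
  obtain rfl : k = n := by simpa using Nat.card_congr e
  refine ⟨rfl, e, fun j => ?_⟩
  rw [Fin.cast_eq_self]
  exact MatTup.UEquiv.symm (Quotient.exact (Equiv.ofFiberEquiv_map F j))

/-- uniqueness of decomposition into irreducibles. If
`T 0 ⊕ ⋯ ⊕ T (n-1) ≡ S 0 ⊕ ⋯ ⊕ S (k-1)` with all `T j`, `S j` irreducible, then `k = n`
and there is a permutation `τ` with `S j ≡ T (τ j)` for all `j`. -/
theorem stmt_6 {Λ : Type*} [Nonempty Λ] {n k : ℕ} (hn : 0 < n) (hk : 0 < k)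
    (T : Fin n → MatTup Λ) (S : Fin k → MatTup Λ)
    (hT : ∀ j, (T j).Irred) (hS : ∀ j, (S j).Irred)
    (h : (MatTup.bigDsum T hn).UEquiv (MatTup.bigDsum S hk)) :
    ∃ (hkn : k = n) (τ : Equiv.Perm (Fin n)),
      ∀ j : Fin k, (S j).UEquiv (T (τ (Fin.cast hkn j))) :=
  stmt_6_general hn hk T S hT hS h
end
end

section
/- A tuple X of complex matrices over an index set Λ is irreducible if and only if every unitary U ∈ stab(X) is a scalar multiple of the identity matrix. -/
noncomputable section

/-!
A unitary `U` commuting with every `X_λ` is scalar as soon as its Hermitian parts `ℜ U` and `ℑ U`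
are. Diagonalising a Hermitian `H` that commutes with the tuple, `H = W D W*`, the tuple `W* X W`
commutes with `D` and therefore vanishes between distinct eigenvalues of `H`; reordering the basis
so that one eigenvalue comes first then splits `X` as a direct sum unless `H` is scalar.
Conversely, if `V.X = A ⊕ B`, then `V* (1 ⊕ -1) V` is a non-scalar unitary in the stabiliser.
-/

theorem Commute.star_left_of_mem_unitary {R : Type*} [Monoid R] [StarMul R] {u x : R}
    (hu : u ∈ unitary R) (h : Commute u x) : Commute (star u) x := by
  rw [commute_unitary_iff_star_right_conjugate (Unitary.star_mem hu), _root_.star_star,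
    ← commute_unitary_iff_star_left_conjugate hu]
  exact h

open Matrix ComplexStarModule

namespace Matrix

theorem fromBlocks_zero_zero_apply_of_isLeft_ne {n m α : Type*} [Zero α] {A : Matrix n n α}
    {D : Matrix m m α} {x y : n ⊕ m} (h : x.isLeft ≠ y.isLeft) : fromBlocks A 0 0 D x y = 0 := by
  cases x <;> cases y <;> simp_all

variable {n α : Type*} [Fintype n] [DecidableEq n]

theorem commute_diagonal_iff [CommRing α] [NoZeroDivisors α] {M : Matrix n n α} {d : n → α} :
    Commute M (diagonal d) ↔ ∀ i j, d i ≠ d j → M i j = 0 := by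
  refine ⟨fun h i j hd => ?_, fun h => ?_⟩
  · have hij := congrFun₂ h.eq i j
    rw [mul_diagonal, diagonal_mul] at hij
    have : M i j * (d j - d i) = 0 := by linear_combination hij
    exact (mul_eq_zero.mp this).resolve_right (sub_ne_zero.mpr (Ne.symm hd))
  · ext i j
    rw [mul_diagonal, diagonal_mul]
    by_cases hd : d i = d j
    · rw [hd, mul_comm]
    · rw [h i j hd, zero_mul, mul_zero]

theorem inv_eq_star_of_mem_unitaryGroup [CommRing α] [StarRing α] {U : Matrix n n α}
    (hU : U ∈ unitaryGroup n α) : U⁻¹ = star U :=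
  inv_eq_right_inv (mem_unitaryGroup_iff.mp hU)

theorem submatrix_mem_unitaryGroup [CommRing α] [StarRing α] {U : Matrix n n α}
    (hU : U ∈ unitaryGroup n α) (e : n ≃ n) : U.submatrix e id ∈ unitaryGroup n α := by
  rw [mem_unitaryGroup_iff, star_eq_conjTranspose, conjTranspose_submatrix,
    ← Equiv.coe_refl, submatrix_mul_equiv, ← star_eq_conjTranspose, mem_unitaryGroup_iff.mp hU,
    submatrix_one_equiv]

end Matrix

namespace MatTup

variable {Λ : Type*}

theorem ext_iff_reindex {P Q : MatTup Λ} :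
    P = Q ↔ ∃ h : P.deg = Q.deg, ∀ l, reindex (finCongr h) (finCongr h) (P.mat l) = Q.mat l := by
  obtain ⟨n, hn, f⟩ := P
  obtain ⟨n', hn', g⟩ := Q
  constructor
  · rintro ⟨⟩
    exact ⟨rfl, fun l => by simp⟩
  · rintro ⟨hdeg, h⟩
    obtain rfl : n = n' := hdeg
    simp only [finCongr_refl, reindex_refl_refl] at h
    simp only [mk.injEq, heq_eq_eq, true_and]
    exact funext h

theorem act_mat_of_mem_unitaryGroup (X : MatTup Λ) {U : Matrix (Fin X.deg) (Fin X.deg) ℂ}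
    (hU : U ∈ unitaryGroup (Fin X.deg) ℂ) (l : Λ) : (X.act U).mat l = U * X.mat l * star U := by
  rw [← inv_eq_star_of_mem_unitaryGroup hU]
  rfl

theorem mem_stab_iff {X : MatTup Λ} {U : Matrix (Fin X.deg) (Fin X.deg) ℂ} :
    U ∈ X.stab ↔ U ∈ unitaryGroup (Fin X.deg) ℂ ∧ ∀ l, Commute U (X.mat l) := by
  refine and_congr_right fun hU => ?_
  simp only [ext_iff_reindex (P := X.act U),
    act_mat_of_mem_unitaryGroup X hU, commute_unitary_iff_star_right_conjugate hU]
  exact ⟨fun ⟨_, h⟩ => h, fun h => ⟨rfl, h⟩⟩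

theorem conj_submatrix_of_mem_unitaryGroup {n : ℕ} {V : Matrix (Fin n) (Fin n) ℂ}
    (hV : V ∈ unitaryGroup (Fin n) ℂ) (τ : Equiv.Perm (Fin n)) (N : Matrix (Fin n) (Fin n) ℂ) :
    V.submatrix τ id * N * (V.submatrix τ id)⁻¹ = (V * N * star V).submatrix τ τ := by
  nth_rw 1 [← submatrix_id_id N]
  rw [← Equiv.coe_refl, inv_submatrix_equiv, inv_eq_star_of_mem_unitaryGroup hV,
    submatrix_mul_equiv, submatrix_mul_equiv]

theorem not_irred_of_blocks (X : MatTup Λ) {V : Matrix (Fin X.deg) (Fin X.deg) ℂ}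
    (hV : V ∈ unitaryGroup (Fin X.deg) ℂ) {k m : ℕ} (hk : 0 < k) (hm : 0 < m)
    (e : Fin k ⊕ Fin m ≃ Fin X.deg)
    (h : ∀ l x y, x.isLeft ≠ y.isLeft → (V * X.mat l * star V) (e x) (e y) = 0) :
    ¬ X.Irred := by
  set M := fun l => V * X.mat l * star V
  have hkm : k + m = X.deg := by simpa using Fintype.card_congr e
  let τ : Equiv.Perm (Fin X.deg) := (finCongr hkm.symm).trans (finSumFinEquiv.symm.trans e)
  refine fun hX => hX ⟨⟨k, hk, fun l => (M l).submatrix (e ∘ .inl) (e ∘ .inl)⟩,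
    ⟨m, hm, fun l => (M l).submatrix (e ∘ .inr) (e ∘ .inr)⟩, V.submatrix τ id,
    submatrix_mem_unitaryGroup hV τ, ext_iff_reindex.mpr ⟨hkm.symm, fun l => ?_⟩⟩
  rw [show (X.act _).mat l = (M l).submatrix τ τ from
    conj_submatrix_of_mem_unitaryGroup hV τ (X.mat l)]
  ext i j
  change M l (e (finSumFinEquiv.symm i)) (e (finSumFinEquiv.symm j)) =
    fromBlocks _ 0 0 _ (finSumFinEquiv.symm i) (finSumFinEquiv.symm j)
  generalize finSumFinEquiv.symm i = x, finSumFinEquiv.symm j = y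
  rcases x with a | a <;> rcases y with b | b
  · rfl
  · exact h l _ _ (by simp)
  · exact h l _ _ (by simp)
  · rfl

theorem not_irred_of_split (X : MatTup Λ) {V : Matrix (Fin X.deg) (Fin X.deg) ℂ}
    (hV : V ∈ unitaryGroup (Fin X.deg) ℂ) {β : Type*} (p : Fin X.deg → β) {i₀ j₀ : Fin X.deg}
    (hp : p i₀ ≠ p j₀) (h : ∀ l i j, p i ≠ p j → (V * X.mat l * star V) i j = 0) :
    ¬ X.Irred := by
  classical
  let q : Fin X.deg → Prop := fun i => p i = p i₀
  let e := (Equiv.sumCongr (Fintype.equivFin {i // q i}).symm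
    (Fintype.equivFin {i // ¬ q i}).symm).trans (Equiv.sumCompl q)
  have he : ∀ x, q (e x) ↔ x.isLeft := by
    rintro (a | a)
    · simpa [e] using ((Fintype.equivFin {i // q i}).symm a).2
    · simpa [e] using ((Fintype.equivFin {i // ¬ q i}).symm a).2
  refine not_irred_of_blocks X hV (Fintype.card_pos_iff.mpr ⟨⟨i₀, rfl⟩⟩)
    (Fintype.card_pos_iff.mpr ⟨⟨j₀, hp.symm⟩⟩) e fun l x y hxy => h l _ _ fun hpxy => hxy ?_
  rw [Bool.eq_iff_iff, ← he x, ← he y]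
  simp only [q, hpxy]

theorem exists_split_of_not_irred {X : MatTup Λ} (hX : ¬ X.Irred) :
    ∃ V ∈ unitaryGroup (Fin X.deg) ℂ, ∃ p : Fin X.deg → Bool, (∃ i j, p i ≠ p j) ∧
      ∀ l i j, p i ≠ p j → (V * X.mat l * star V) i j = 0 := by
  obtain ⟨A, B, V, hV, hVX⟩ := not_not.mp hX
  obtain ⟨hdeg, hmat⟩ : ∃ h : X.deg = A.deg + B.deg,
      ∀ l, reindex (finCongr h) (finCongr h) (V * X.mat l * star V) = (A.dsum B).mat l := by
    obtain ⟨h, hm⟩ := ext_iff_reindex.mp hVX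
    exact ⟨h, fun l => act_mat_of_mem_unitaryGroup X hV l ▸ hm l⟩
  let p i := (finSumFinEquiv.symm (finCongr hdeg i)).isLeft
  refine ⟨V, hV, p, ⟨(finCongr hdeg).symm (finSumFinEquiv (.inl ⟨0, A.deg_pos⟩)),
    (finCongr hdeg).symm (finSumFinEquiv (.inr ⟨0, B.deg_pos⟩)), ?_⟩, fun l i j hij => ?_⟩
  · simp only [p, Equiv.apply_symm_apply, Equiv.symm_apply_apply, Sum.isLeft_inl, Sum.isLeft_inr]
    decide
  · calc (V * X.mat l * star V) i j
        = reindex (finCongr hdeg) (finCongr hdeg) (V * X.mat l * star V)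
            (finCongr hdeg i) (finCongr hdeg j) := rfl
      _ = 0 := by rw [hmat l]; exact fromBlocks_zero_zero_apply_of_isLeft_ne hij

theorem Irred.eq_smul_one_of_isHermitian {X : MatTup Λ} (hX : X.Irred)
    {H : Matrix (Fin X.deg) (Fin X.deg) ℂ} (hH : H.IsHermitian) (hc : ∀ l, Commute H (X.mat l)) :
    ∃ c : ℂ, H = c • 1 := by
  set W := hH.eigenvectorUnitary
  set d : Fin X.deg → ℂ := RCLike.ofReal ∘ hH.eigenvalues
  have hd : ∀ i j, d i = d j := by
    by_contra! ⟨i, j, hij⟩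
    refine not_irred_of_split X (star W).2 d hij (fun l => commute_diagonal_iff.mp ?_) hX
    rw [← hH.conjStarAlgAut_star_eigenvectorUnitary]
    exact ((hc l).map (Unitary.conjStarAlgAut ℂ _ (star W))).symm
  refine ⟨d ⟨0, X.deg_pos⟩, ?_⟩
  rw [hH.spectral_theorem, show diagonal d = d ⟨0, X.deg_pos⟩ • 1 by
    rw [smul_one_eq_diagonal]; exact congrArg diagonal (funext fun i => hd i _)]
  simp

theorem Irred.eq_smul_one_of_commute {X : MatTup Λ} (hX : X.Irred)
    {U : Matrix (Fin X.deg) (Fin X.deg) ℂ} (hc : ∀ l, Commute U (X.mat l))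
    (hc' : ∀ l, Commute (star U) (X.mat l)) : ∃ c : ℂ, U = c • 1 := by
  obtain ⟨a, ha⟩ := hX.eq_smul_one_of_isHermitian (isHermitian_iff_isSelfAdjoint.mpr (ℜ U).2)
    fun l => by rw [realPart_apply_coe]; exact ((hc l).add_left (hc' l)).smul_left _
  obtain ⟨b, hb⟩ := hX.eq_smul_one_of_isHermitian (isHermitian_iff_isSelfAdjoint.mpr (ℑ U).2)
    fun l => by
      rw [imaginaryPart_apply_coe]; exact (((hc l).sub_left (hc' l)).smul_left _).smul_left _
  refine ⟨a + Complex.I * b, ?_⟩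
  rw [← realPart_add_I_smul_imaginaryPart U, ha, hb, smul_smul, add_smul]

theorem exists_not_scalar_mem_stab_of_not_irred {X : MatTup Λ} (hX : ¬ X.Irred) :
    ∃ U ∈ X.stab, ∀ c : ℂ, U ≠ c • 1 := by
  obtain ⟨V, hV, p, ⟨i, j, hij⟩, hsplit⟩ := exists_split_of_not_irred hX
  let d : Fin X.deg → ℂ := fun i => if p i then 1 else -1
  have hd : ∀ i j, d i ≠ d j → p i ≠ p j := fun i j hdij hpij => hdij (by simp only [d, hpij])
  have hD : diagonal d ∈ unitaryGroup (Fin X.deg) ℂ := by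
    rw [mem_unitaryGroup_iff, star_eq_conjTranspose, diagonal_conjTranspose,
      diagonal_mul_diagonal, ← diagonal_one]
    exact congrArg diagonal (funext fun i => by by_cases hi : p i <;> simp [d, hi])
  let conj := Unitary.conjStarAlgAut ℂ _ (star (⟨V, hV⟩ : unitaryGroup (Fin X.deg) ℂ))
  refine ⟨conj (diagonal d), mem_stab_iff.mpr ⟨?_, fun l => ?_⟩, fun c hc => ?_⟩
  · simpa [conj] using mul_mem (mul_mem (Unitary.star_mem hV) hD) hV
  · rw [← conj.apply_symm_apply (X.mat l)]
    refine (Commute.symm ?_).map conj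
    simpa [conj] using commute_diagonal_iff.mpr fun i j h => hsplit l i j (hd i j h)
  · have hdc : diagonal d = c • 1 := by
      rw [← conj.symm_apply_apply (diagonal d), hc, map_smul, map_one]
    have hdij : d i = d j := by
      have hi := congrFun₂ hdc i i
      have hj := congrFun₂ hdc j j
      simp only [diagonal_apply_eq, Matrix.smul_apply, one_apply_eq] at hi hj
      rw [hi, hj]
    revert hij hdij
    simp only [d]
    cases p i <;> cases p j <;> norm_num

end MatTup

theorem stmt_9_general {Λ : Type*} (X : MatTup Λ) :
    X.Irred ↔ ∀ U ∈ X.stab, ∃ c : ℂ, U = c • (1 : Matrix (Fin X.deg) (Fin X.deg) ℂ) := by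
  refine ⟨fun hX U hU => ?_, fun hscalar => ?_⟩
  · obtain ⟨hU, hc⟩ := MatTup.mem_stab_iff.mp hU
    exact hX.eq_smul_one_of_commute hc fun l => (hc l).star_left_of_mem_unitary hU
  · by_contra hX
    obtain ⟨U, hU, hne⟩ := MatTup.exists_not_scalar_mem_stab_of_not_irred hX
    obtain ⟨c, hc⟩ := hscalar U hU
    exact hne c hc

/-- A tuple `X` is irreducible iff every unitary in `stab(X)` is a
scalar multiple of the identity matrix. -/
theorem stmt_9 {Λ : Type*} [Nonempty Λ] (X : MatTup Λ) :
    X.Irred ↔ ∀ U ∈ X.stab, ∃ c : ℂ, U = c • (1 : Matrix (Fin X.deg) (Fin X.deg) ℂ) :=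
  stmt_9_general X
end
end
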